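/- arXiv:1703.01218 — 3 statements merged into one kernel-verified Lean document; each statement's English description precedes it below -/
import Mathlib

section
/- Let W ∈ ℝ^{n×n} with zero diagonal and b ∈ ℝ^n define a linear influence game with PSNE set NE = {x ∈ {-1,1}^n : ∀i, x_i(⟨w_{i,-i}, x_{-i}⟩ - b_i) ≥ 0}. If the game satisfies the strict-payoff condition ∀x ∈ NE, ∀i, x_i(⟨w_{i,-i}, x_{-i}⟩ - b_i) > 0, and the game is non-trivial in the sense that 1 ≤ |NE| ≤ 2^n - 1, then |NE| ≤ 2^{n-1}. -/
open Finset

noncomputable def sgn (s : Bool) : ℝ := if s then 1 else -1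

noncomputable def payoff {n : ℕ} (W : Matrix (Fin n) (Fin n) ℝ) (b : Fin n → ℝ)
    (x : Fin n → Bool) (i : Fin n) : ℝ :=
  sgn (x i) * ((∑ j ∈ Finset.univ.erase i, W i j * sgn (x j)) - b i)

lemma payoff_flip {n : ℕ} (W : Matrix (Fin n) (Fin n) ℝ) (b : Fin n → ℝ)
    (x : Fin n → Bool) (i : Fin n) :
    payoff W b (Function.update x i (!x i)) i = - payoff W b x i := by
  unfold payoff
  rw [Function.update_self]
  have h2 : ∑ j ∈ Finset.univ.erase i, W i j * sgn (Function.update x i (!x i) j)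
      = ∑ j ∈ Finset.univ.erase i, W i j * sgn (x j) := by
    refine Finset.sum_congr rfl fun j hj => ?_
    rw [Function.update_of_ne (Finset.ne_of_mem_erase hj)]
  rw [h2]
  have : sgn (!x i) = - sgn (x i) := by cases x i <;> simp [sgn]
  rw [this]; ring

theorem stmt0 (n : ℕ) (hn : 1 ≤ n) (W : Matrix (Fin n) (Fin n) ℝ) (b : Fin n → ℝ)
    (hdiag : ∀ i, W i i = 0)
    (NE : Set (Fin n → Bool))
    (hNE : NE = {x | ∀ i, 0 ≤ payoff W b x i})
    (hstrict : ∀ x ∈ NE, ∀ i, 0 < payoff W b x i)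
    (hlo : 1 ≤ NE.ncard) (hhi : NE.ncard ≤ 2 ^ n - 1) :
    NE.ncard ≤ 2 ^ (n - 1) := by
  classical
  set i0 : Fin n := ⟨0, hn⟩
  set f : (Fin n → Bool) → (Fin n → Bool) := fun x => Function.update x i0 (!x i0) with hf
  have hff : ∀ x, f (f x) = x := by
    intro x
    funext j
    by_cases h : j = i0
    · subst h; simp [f, Function.update_self]
    · simp [f, Function.update_of_ne h]
  have hinj : Function.Injective f := Function.LeftInverse.injective hff
  have hmap : ∀ x ∈ NE, f x ∈ NEᶜ := by
    intro x hx
    intro hfx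
    have h1 := hstrict x hx i0
    have h2 : 0 ≤ payoff W b (f x) i0 := by
      rw [hNE] at hfx; exact hfx i0
    rw [hf, payoff_flip] at h2
    linarith
  have himg : f '' NE ⊆ NEᶜ := by
    rintro _ ⟨x, hx, rfl⟩; exact hmap x hx
  have h1 : NE.ncard = (f '' NE).ncard :=
    (Set.ncard_image_of_injective _ hinj).symm
  have h2 : (f '' NE).ncard ≤ NEᶜ.ncard :=
    Set.ncard_le_ncard himg (Set.toFinite _)
  have h3 : NE.ncard + NEᶜ.ncard = Nat.card (Fin n → Bool) :=
    Set.ncard_add_ncard_compl NE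
  have h4 : Nat.card (Fin n → Bool) = 2 ^ n := by
    simp [Nat.card_eq_fintype_card]
  have h5 : 2 ^ n = 2 * 2 ^ (n - 1) := by
    rw [← pow_succ']
    congr 1
    omega
  omega
end

section
/- Let ℓ: ℝ^s → ℝ be convex and differentiable, v* ∈ ℝ^s, λ > 0, and let v̂ minimize v ↦ ℓ(v) + λ‖v‖₁. If λ ≥ 2‖∇ℓ(v*)‖_∞ and S = supp(v*), then the error Δ = v̂ - v* satisfies ‖Δ_{S^c}‖₁ ≤ 3‖Δ_S‖₁, and hence ‖Δ‖₁ ≤ 4√|S|·‖Δ_S‖₂. -/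
open scoped Classical

theorem stmt9 (s : ℕ) (ℓ : (Fin s → ℝ) → ℝ)
    (hconv : ConvexOn ℝ Set.univ ℓ) (hdiff : Differentiable ℝ ℓ)
    (vstar vhat : Fin s → ℝ) (lam : ℝ) (hlam : 0 < lam)
    (g : Fin s → ℝ) (hg : ∀ i, g i = fderiv ℝ ℓ vstar (Pi.single i 1))
    (hlam2 : ∀ i, 2 * |g i| ≤ lam)
    (hopt : ∀ v, ℓ vhat + lam * ∑ i, |vhat i| ≤ ℓ v + lam * ∑ i, |v i|)
    (S : Finset (Fin s)) (hS : S = Finset.univ.filter (fun i => vstar i ≠ 0)) :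
    (∑ i ∈ Sᶜ, |vhat i - vstar i| ≤ 3 * ∑ i ∈ S, |vhat i - vstar i|) ∧
    (∑ i, |vhat i - vstar i| ≤
      4 * Real.sqrt S.card * Real.sqrt (∑ i ∈ S, (vhat i - vstar i) ^ 2)) := by
  set D : Fin s → ℝ := fun i => vhat i - vstar i with hDdef
  -- gradient inequality from convexity along the segment
  have hgrad : ℓ vstar + (fderiv ℝ ℓ vstar) D ≤ ℓ vhat := by
    set m : ℝ → (Fin s → ℝ) := fun t => vstar + t • D with hm
    have hm0 : m 0 = vstar := by simp [hm]
    have hm1 : m 1 = vhat := by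
      funext j; simp [hm, hDdef]
    have hφconv : ConvexOn ℝ Set.univ (fun t : ℝ => ℓ (m t)) := by
      have h := hconv.comp_affineMap
        (AffineMap.lineMap vstar (vstar + D) : ℝ →ᵃ[ℝ] (Fin s → ℝ))
      have heq : (fun t : ℝ => ℓ (m t)) =
          ℓ ∘ (AffineMap.lineMap vstar (vstar + D) : ℝ →ᵃ[ℝ] (Fin s → ℝ)) := by
        funext t
        simp [hm, AffineMap.lineMap_apply, add_comm]
      rw [heq]
      simpa using h
    have hmderiv : HasDerivAt m D 0 := by
      have : HasDerivAt (fun t : ℝ => t • D) ((1 : ℝ) • D) 0 :=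
        (hasDerivAt_id 0).smul_const D
      simpa [hm, one_smul] using this.const_add vstar
    have hφderiv : HasDerivAt (fun t : ℝ => ℓ (m t)) ((fderiv ℝ ℓ vstar) D) 0 := by
      have hF : HasFDerivAt ℓ (fderiv ℝ ℓ vstar) (m 0) := by
        rw [hm0]; exact (hdiff vstar).hasFDerivAt
      exact hF.comp_hasDerivAt 0 hmderiv
    have hslope := hφconv.le_slope_of_hasDerivAt (Set.mem_univ (0 : ℝ))
      (Set.mem_univ (1 : ℝ)) one_pos hφderiv
    rw [slope_def_field] at hslope
    simp only [hm0, hm1] at hslope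
    have : (fderiv ℝ ℓ vstar) D ≤ ℓ vhat - ℓ vstar := by
      simpa [div_eq_mul_inv] using hslope
    linarith
  -- linearity: fderiv at D equals sum of g i * D i
  have hlin : (fderiv ℝ ℓ vstar) D = ∑ i, D i * g i := by
    have hD : D = ∑ i, D i • (Pi.single i 1 : Fin s → ℝ) := by
      funext j
      simp [Finset.sum_apply, Pi.single_apply, eq_comm]
    conv_lhs => rw [hD]
    rw [map_sum]
    simp [hg, map_smul, smul_eq_mul]
  -- lower bound on the directional derivative
  have hlow : -(lam / 2) * ∑ i, |D i| ≤ ∑ i, D i * g i := by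
    have hterm : ∑ i, (-(lam / 2) * |D i|) ≤ ∑ i, D i * g i := by
      apply Finset.sum_le_sum
      intro i _
      have h1 : -(D i * g i) ≤ |D i| * |g i| := by
        have := neg_abs_le (D i * g i)
        rw [abs_mul] at this
        linarith
      have h2 : |g i| ≤ lam / 2 := by linarith [hlam2 i]
      have h3 : |D i| * |g i| ≤ |D i| * (lam / 2) :=
        mul_le_mul_of_nonneg_left h2 (abs_nonneg _)
      have h4 : -(|D i| * (lam / 2)) ≤ D i * g i := neg_le.mp (h1.trans h3)
      calc -(lam / 2) * |D i| = -(|D i| * (lam / 2)) := by ring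
        _ ≤ D i * g i := h4
    calc -(lam / 2) * ∑ i, |D i| = ∑ i, (-(lam / 2) * |D i|) := by
          rw [Finset.mul_sum]
      _ ≤ ∑ i, D i * g i := hterm
  -- optimality at vstar
  have hopt' := hopt vstar
  -- vstar vanishes off S
  have hoffS : ∀ i ∈ Sᶜ, vstar i = 0 := by
    intro i hi
    rw [Finset.mem_compl, hS, Finset.mem_filter] at hi
    push_neg at hi
    exact hi (Finset.mem_univ i)
  set a := ∑ i ∈ S, |D i| with ha
  set b := ∑ i ∈ Sᶜ, |D i| with hb
  have hsplit : ∑ i, |D i| = a + b := (Finset.sum_add_sum_compl S _).symm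
  have hnorm : ∑ i, |vstar i| - ∑ i, |vhat i| ≤ a - b := by
    have h1 : ∑ i, |vstar i| - ∑ i, |vhat i| = ∑ i, (|vstar i| - |vhat i|) := by
      rw [Finset.sum_sub_distrib]
    rw [h1, ← Finset.sum_add_sum_compl S (fun i => |vstar i| - |vhat i|)]
    have hA : ∑ i ∈ S, (|vstar i| - |vhat i|) ≤ a := by
      apply Finset.sum_le_sum
      intro i _
      have := abs_sub_abs_le_abs_sub (vstar i) (vhat i)
      have : |vstar i - vhat i| = |D i| := by
        rw [hDdef]; rw [abs_sub_comm]
      linarith [abs_sub_abs_le_abs_sub (vstar i) (vhat i), this]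
    have hB : ∑ i ∈ Sᶜ, (|vstar i| - |vhat i|) = -b := by
      rw [hb, ← Finset.sum_neg_distrib]
      apply Finset.sum_congr rfl
      intro i hi
      rw [hoffS i hi]
      simp [hDdef, hoffS i hi]
    rw [hB]; linarith
  -- combine: lam * (a - b) ≥ -(lam/2)*(a+b)
  have hcomb : -(lam / 2) * (a + b) ≤ lam * (a - b) := by
    have h1 : (fderiv ℝ ℓ vstar) D ≤ ℓ vhat - ℓ vstar := by linarith
    have h2 : ℓ vhat - ℓ vstar ≤ lam * (∑ i, |vstar i| - ∑ i, |vhat i|) := by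
      nlinarith [hopt']
    have h3 : lam * (∑ i, |vstar i| - ∑ i, |vhat i|) ≤ lam * (a - b) :=
      mul_le_mul_of_nonneg_left hnorm (le_of_lt hlam)
    rw [← hsplit]
    calc -(lam / 2) * ∑ i, |D i| ≤ ∑ i, D i * g i := hlow
      _ = (fderiv ℝ ℓ vstar) D := hlin.symm
      _ ≤ ℓ vhat - ℓ vstar := h1
      _ ≤ lam * (a - b) := le_trans h2 h3
  have hba : b ≤ 3 * a := by nlinarith
  have ha0 : 0 ≤ a := Finset.sum_nonneg fun i _ => abs_nonneg _
  refine ⟨hba, ?_⟩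
  -- Cauchy–Schwarz: a ≤ √|S| √(∑_S D²)
  have hcs : a ≤ Real.sqrt S.card * Real.sqrt (∑ i ∈ S, D i ^ 2) := by
    have hsq : a ^ 2 ≤ (S.card : ℝ) * ∑ i ∈ S, D i ^ 2 := by
      have := sq_sum_le_card_mul_sum_sq (s := S) (f := fun i => |D i|)
      simpa [sq_abs] using this
    have hnn : (0 : ℝ) ≤ (S.card : ℝ) * ∑ i ∈ S, D i ^ 2 := by
      positivity
    calc a = Real.sqrt (a ^ 2) := by rw [Real.sqrt_sq ha0]
      _ ≤ Real.sqrt ((S.card : ℝ) * ∑ i ∈ S, D i ^ 2) := Real.sqrt_le_sqrt hsq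
      _ = Real.sqrt S.card * Real.sqrt (∑ i ∈ S, D i ^ 2) :=
        Real.sqrt_mul (Nat.cast_nonneg _) _
  calc ∑ i, |D i| = a + b := hsplit
    _ ≤ 4 * a := by linarith
    _ ≤ 4 * (Real.sqrt S.card * Real.sqrt (∑ i ∈ S, D i ^ 2)) := by linarith
    _ = 4 * Real.sqrt S.card * Real.sqrt (∑ i ∈ S, D i ^ 2) := by ring
end

section
/- For q = 1/n and n ≥ 2, the quantity ((2^n q - 1)/(2^n - 1))·(log q - log((1-q)/(2^n - 1))) is at most log 2. -/
/-!
Write `P = 2 ^ n` and `q = 1 / n`. The second factor is `log (q (P - 1) / (1 - q))`, which lies in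
`[0, log P]` because `q P ≥ 1` and `q ≤ 1 / 2`, while the first factor is at most `q`. Hence the
product is at most `q log P = (1 / n) · n log 2 = log 2`.
-/

open Real

lemma log_sub_log_one_sub_div {q P : ℝ} (hq₀ : 0 < q) (hq₁ : q < 1) (hP : 1 < P) :
    log q - log ((1 - q) / (P - 1)) = log (q * (P - 1) / (1 - q)) := by
  have hq : 0 < 1 - q := by linarith
  have hP₁ : 0 < P - 1 := by linarith
  rw [← log_div hq₀.ne' (div_pos hq hP₁).ne']
  congr 1
  field_simp

lemma mul_sub_one_div_sub_one_le {q P : ℝ} (hq : q ≤ 1) (hP : 1 < P) :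
    (P * q - 1) / (P - 1) ≤ q := by
  rw [div_le_iff₀ (by linarith)]
  linarith

lemma log_mul_sub_one_div_one_sub_nonneg {q P : ℝ} (hq : q < 1) (hqP : 1 ≤ q * P) :
    0 ≤ log (q * (P - 1) / (1 - q)) := by
  apply log_nonneg
  rw [le_div_iff₀ (by linarith)]
  linarith

lemma log_mul_sub_one_div_one_sub_le_log {q P : ℝ} (hq₀ : 0 < q) (hq : q ≤ 1 / 2) (hP : 1 < P) :
    log (q * (P - 1) / (1 - q)) ≤ log P := by
  have hq₁ : 0 < 1 - q := by linarith
  apply log_le_log (by positivity)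
  rw [div_le_iff₀ hq₁]
  nlinarith

theorem mul_sub_one_div_mul_log_sub_le {q P : ℝ} (hq₀ : 0 < q) (hq : q ≤ 1 / 2)
    (hqP : 1 ≤ q * P) :
    (P * q - 1) / (P - 1) * (log q - log ((1 - q) / (P - 1))) ≤ q * log P := by
  have hP : 1 < P := by nlinarith
  rw [log_sub_log_one_sub_div hq₀ (by linarith) hP]
  exact mul_le_mul (mul_sub_one_div_sub_one_le (by linarith) hP)
    (log_mul_sub_one_div_one_sub_le_log hq₀ hq hP)
    (log_mul_sub_one_div_one_sub_nonneg (by linarith) hqP) hq₀.le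

theorem stmt13 (n : ℕ) (hn : 2 ≤ n) :
    (((2 ^ n : ℝ) * (1 / n) - 1) / ((2 ^ n : ℝ) - 1)) *
      (Real.log (1 / (n : ℝ)) - Real.log ((1 - 1 / (n : ℝ)) / ((2 ^ n : ℝ) - 1)))
      ≤ Real.log 2 := by
  have hn₂ : (2 : ℝ) ≤ n := by exact_mod_cast hn
  have hn₀ : (0 : ℝ) < n := by linarith
  have hq : 1 / (n : ℝ) ≤ 1 / 2 := one_div_le_one_div_of_le two_pos hn₂
  have hqP : 1 ≤ 1 / (n : ℝ) * 2 ^ n := by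
    rw [one_div_mul_eq_div, one_le_div hn₀]
    exact_mod_cast (Nat.lt_two_pow_self (n := n)).le
  calc _ ≤ 1 / (n : ℝ) * log (2 ^ n) :=
        mul_sub_one_div_mul_log_sub_le (by positivity) hq hqP
    _ = log 2 := by
        rw [log_pow]
        field_simp
end
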